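/- Let n = 2^r − 1 with r ≥ 3, let C ⊆ F_2^n be a perfect binary code, let i be a coordinate, let I and I' be the sets of i-even and i-odd codewords of C, let I_1 be the set of vectors at Hamming distance exactly 1 from I ∪ (I + e_i), and let I'_1 be the set of vectors at distance exactly 1 from I' ∪ (I' + e_i). Then the four sets I ∪ (I + e_i), I_1, I'_1, I' ∪ (I' + e_i) partition F_2^n and form a perfect 4-coloring of the Hamming graph H(n,2) with parameter matrix [[1, n−1, 0, 0], [2, 1, n−3, 0], [0, n−3, 1, 2], [0, 0, n−1, 1]]. -/

import Mathlib

/-- `C` is a perfect binary single-error-correcting code: every vector is at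
Hamming distance at most 1 from exactly one codeword. -/
def IsPerfectCode (n : ℕ) (C : Set (Fin n → ZMod 2)) : Prop :=
  ∀ v : Fin n → ZMod 2, ∃! c, c ∈ C ∧ hammingDist v c ≤ 1

/-- `x` is `i`-even: either `wt x` is odd and `x i = 1`, or `wt x` is even and
`x i = 0`. -/
def IEven (n : ℕ) (i : Fin n) (x : Fin n → ZMod 2) : Prop :=
  (Odd (hammingNorm x) ∧ x i = 1) ∨ (Even (hammingNorm x) ∧ x i = 0)

/-- The unit vector `e i`. -/
def unitVec (n : ℕ) (i : Fin n) : Fin n → ZMod 2 := Pi.single i 1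

/-- The set of vectors at Hamming distance exactly 1 from the set `S`. -/
def DistOne (n : ℕ) (S : Set (Fin n → ZMod 2)) : Set (Fin n → ZMod 2) :=
  {v | v ∉ S ∧ ∃ c ∈ S, hammingDist v c = 1}

/-!
Put `A = C ∪ (C + e_i)` and `φ x = wt x + x_i (mod 2)`. This is a linear functional with
`φ e_m = 1` for `m ≠ i` and `φ e_i = 0`, the `i`-even words are its zeros, and `φ (x + e_i) = φ x`.
So the four classes are `A ∩ {φ = 0}`, `Aᶜ ∩ {φ = 1}`, `Aᶜ ∩ {φ = 0}` and `A ∩ {φ = 1}`, and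
they partition the space. A step along `e_m` changes `φ` exactly when `m ≠ i`, so the whole
parameter matrix comes from how the neighbourhood of a vertex `v` meets `A`. Since `C` is
perfect, a vertex of `A` has only one neighbour in `A`, namely `v + e_i`. A vertex outside `A`
has exactly two, `v + e_j` and `v + e_p`, where `v + e_j ∈ C`, `v + e_i + e_p ∈ C` and
`j, p ≠ i`.
-/

namespace PerfectCode

variable {n : ℕ}

lemma zmod_two_eq_zero_or_eq_one (a : ZMod 2) : a = 0 ∨ a = 1 := by
  revert a; decide

lemma zmod_two_ne_zero_iff {a : ZMod 2} : a ≠ 0 ↔ a = 1 := by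
  revert a; decide

lemma zmod_two_add_one_eq_iff {a b : ZMod 2} : a + 1 = b ↔ a = b + 1 := by
  revert a b; decide

lemma zmod_two_eq_add_one_of_ne {a b : ZMod 2} (h : a ≠ b) : a = b + 1 := by
  revert a b; decide

lemma add_add_self (x y : Fin n → ZMod 2) : x + y + y = x := by
  funext k; exact CharTwo.add_cancel_right (x k) (y k)

lemma unitVec_injective : Function.Injective (unitVec n) := by
  intro j k h
  simpa [unitVec, Pi.single_apply] using congrFun h j

lemma hammingNorm_eq_one_iff {z : Fin n → ZMod 2} :
    hammingNorm z = 1 ↔ ∃ m, z = unitVec n m := by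
  simp only [hammingNorm, Finset.card_eq_one, Finset.ext_iff, Finset.mem_filter,
    Finset.mem_univ, true_and, Finset.mem_singleton, funext_iff, unitVec, Pi.single_apply]
  refine exists_congr fun m => forall_congr' fun k => ?_
  split_ifs with hk
  · subst hk
    rcases zmod_two_eq_zero_or_eq_one (z k) with h | h <;> simp [h]
  · rcases zmod_two_eq_zero_or_eq_one (z k) with h | h <;> simp [hk, h]

lemma hammingDist_eq_one_iff {v w : Fin n → ZMod 2} :
    hammingDist v w = 1 ↔ ∃ m, w = v + unitVec n m := by
  simp only [hammingDist_eq_hammingNorm, hammingNorm_eq_one_iff, neg_add_eq_iff_eq_add]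

lemma hammingDist_add_unitVec (v : Fin n → ZMod 2) (m : Fin n) :
    hammingDist v (v + unitVec n m) = 1 :=
  hammingDist_eq_one_iff.mpr ⟨m, rfl⟩

def neighborDirs (S : Set (Fin n → ZMod 2)) (v : Fin n → ZMod 2) : Set (Fin n) :=
  {m | v + unitVec n m ∈ S}

noncomputable def neighborCount (S : Set (Fin n → ZMod 2)) (v : Fin n → ZMod 2) : ℕ :=
  {w | hammingDist v w = 1 ∧ w ∈ S}.ncard

lemma neighborCount_eq_ncard_neighborDirs (S : Set (Fin n → ZMod 2)) (v : Fin n → ZMod 2) :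
    neighborCount S v = (neighborDirs S v).ncard := by
  have himage : {w | hammingDist v w = 1 ∧ w ∈ S} = (v + unitVec n ·) '' neighborDirs S v := by
    ext w
    simp only [hammingDist_eq_one_iff, Set.mem_ofPred_eq, Set.mem_image, neighborDirs]
    constructor
    · rintro ⟨⟨m, rfl⟩, hw⟩
      exact ⟨m, hw, rfl⟩
    · rintro ⟨m, hm, rfl⟩
      exact ⟨⟨m, rfl⟩, hm⟩
  rw [neighborCount, himage,
    Set.ncard_image_of_injective _ fun _ _ h => unitVec_injective (add_left_cancel h)]

lemma mem_distOne_iff {S : Set (Fin n → ZMod 2)} {v : Fin n → ZMod 2} :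
    v ∈ DistOne n S ↔ v ∉ S ∧ (neighborDirs S v).Nonempty := by
  simp only [DistOne, Set.mem_ofPred_eq, hammingDist_eq_one_iff]
  exact and_congr_right' ⟨fun ⟨_, hc, m, hm⟩ => ⟨m, (hm ▸ hc : v + unitVec n m ∈ S)⟩,
    fun ⟨m, hm⟩ => ⟨_, hm, m, rfl⟩⟩

lemma ncard_compl_singleton (i : Fin n) : ({i}ᶜ : Set (Fin n)).ncard = n - 1 := by
  rw [Set.ncard_compl, Set.ncard_singleton, Nat.card_eq_fintype_card, Fintype.card_fin]

lemma ncard_compl_triple {j p i : Fin n} (hji : j ≠ i) (hpi : p ≠ i) (hjp : j ≠ p) :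
    ({j, p, i}ᶜ : Set (Fin n)).ncard = n - 3 := by
  rw [Set.ncard_compl, Set.ncard_insert_of_notMem (by simp [hjp, hji]), Set.ncard_pair hpi,
    Nat.card_eq_fintype_card, Fintype.card_fin]

def shiftUnion (C : Set (Fin n → ZMod 2)) (i : Fin n) : Set (Fin n → ZMod 2) :=
  {v | v ∈ C ∨ v + unitVec n i ∈ C}

variable {C : Set (Fin n → ZMod 2)} {i : Fin n} {v : Fin n → ZMod 2}

lemma neighborDirs_shiftUnion :
    neighborDirs (shiftUnion C i) v = neighborDirs C v ∪ neighborDirs C (v + unitVec n i) := by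
  ext m
  simp only [neighborDirs, shiftUnion, Set.mem_ofPred_eq, Set.mem_union, add_right_comm]

lemma neighborDirs_shiftUnion_add_unitVec :
    neighborDirs (shiftUnion C i) (v + unitVec n i) = neighborDirs (shiftUnion C i) v := by
  rw [neighborDirs_shiftUnion, neighborDirs_shiftUnion, add_add_self, Set.union_comm]

def iParity (i : Fin n) (x : Fin n → ZMod 2) : ZMod 2 :=
  ∑ k, x k + x i

lemma iParity_add (x y : Fin n → ZMod 2) : iParity i (x + y) = iParity i x + iParity i y := by
  simp only [iParity, Pi.add_apply, Finset.sum_add_distrib]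
  ring

lemma iParity_unitVec (m : Fin n) : iParity i (unitVec n m) = if m = i then 0 else 1 := by
  simp only [iParity, unitVec, Pi.single_apply, Finset.sum_ite_eq', Finset.mem_univ, if_true,
    eq_comm (a := i)]
  split_ifs <;> decide

lemma iParity_add_unitVec_self (x : Fin n → ZMod 2) :
    iParity i (x + unitVec n i) = iParity i x := by
  rw [iParity_add, iParity_unitVec, if_pos rfl, add_zero]

lemma natCast_hammingNorm (x : Fin n → ZMod 2) : (hammingNorm x : ZMod 2) = ∑ k, x k := by
  rw [hammingNorm, Finset.card_filter, Nat.cast_sum]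
  refine Finset.sum_congr rfl fun k _ => ?_
  rcases zmod_two_eq_zero_or_eq_one (x k) with h | h <;> simp [h]

lemma iEven_iff (x : Fin n → ZMod 2) : IEven n i x ↔ iParity i x = 0 := by
  rw [IEven, iParity, ← natCast_hammingNorm, ← ZMod.natCast_eq_one_iff_odd,
    ← ZMod.natCast_eq_zero_iff_even]
  generalize (hammingNorm x : ZMod 2) = a
  generalize x i = b
  revert a b
  decide

lemma not_iEven_iff (x : Fin n → ZMod 2) : ¬ IEven n i x ↔ iParity i x = 1 := by
  rw [iEven_iff, ← ne_eq, zmod_two_ne_zero_iff]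

def innerClass (C : Set (Fin n → ZMod 2)) (i : Fin n) (ε : ZMod 2) : Set (Fin n → ZMod 2) :=
  {v | v ∈ shiftUnion C i ∧ iParity i v = ε}

-- This is `DistOne n (innerClass C i ε)`: a vertex outside `shiftUnion C i` has its neighbours
-- in `shiftUnion C i` only along directions `≠ i`, and each of those flips the parity.
def outerClass (C : Set (Fin n → ZMod 2)) (i : Fin n) (ε : ZMod 2) : Set (Fin n → ZMod 2) :=
  {v | v ∉ shiftUnion C i ∧ iParity i v = ε + 1}

lemma union_image_add_unitVec_eq_innerClass (ε : ZMod 2) :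
    {x ∈ C | iParity i x = ε} ∪ (· + unitVec n i) '' {x ∈ C | iParity i x = ε} =
      innerClass C i ε := by
  ext v
  have himage : v ∈ (· + unitVec n i) '' {x ∈ C | iParity i x = ε} ↔
      v + unitVec n i ∈ C ∧ iParity i v = ε := by
    constructor
    · rintro ⟨x, ⟨hx, rfl⟩, rfl⟩
      exact ⟨by rwa [add_add_self], iParity_add_unitVec_self x⟩
    · rintro ⟨hv, rfl⟩
      exact ⟨v + unitVec n i, ⟨hv, iParity_add_unitVec_self v⟩, add_add_self v _⟩
  simp only [Set.mem_union, himage, innerClass, shiftUnion, Set.mem_ofPred_eq]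
  tauto

lemma neighborDirs_innerClass (ε : ZMod 2) :
    neighborDirs (innerClass C i ε) v = {m | m ∈ neighborDirs (shiftUnion C i) v ∧
      iParity i v + (if m = i then 0 else 1) = ε} := by
  ext m
  simp only [neighborDirs, innerClass, Set.mem_ofPred_eq, iParity_add, iParity_unitVec]

lemma neighborDirs_outerClass (ε : ZMod 2) :
    neighborDirs (outerClass C i ε) v = {m | m ∉ neighborDirs (shiftUnion C i) v ∧
      iParity i v + (if m = i then 0 else 1) = ε + 1} := by
  ext m
  simp only [neighborDirs, outerClass, Set.mem_ofPred_eq, iParity_add, iParity_unitVec]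

def colorClass (C : Set (Fin n → ZMod 2)) (i : Fin n) : Fin 4 → Set (Fin n → ZMod 2) :=
  ![innerClass C i 0, outerClass C i 0, outerClass C i 1, innerClass C i 1]

lemma pairwise_disjoint_colorClass : Pairwise (Function.onFun Disjoint (colorClass C i)) := by
  intro j k hjk
  refine Set.disjoint_left.mpr fun v hj hk => ?_
  fin_cases j <;> fin_cases k <;>
    simp only [colorClass, innerClass, outerClass, Matrix.cons_val, Matrix.cons_val_zero,
      Matrix.cons_val_one, Fin.zero_eta, Fin.mk_one, Fin.isValue, Fin.reduceFinMk,
      Set.mem_ofPred_eq] at hj hk <;>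
    first
      | exact absurd rfl hjk
      | exact hk.1 hj.1
      | exact hj.1 hk.1
      | exact absurd (hj.2.symm.trans hk.2) (by decide)

lemma iUnion_colorClass : ⋃ j, colorClass C i j = Set.univ := by
  refine Set.eq_univ_of_forall fun v => Set.mem_iUnion.mpr ?_
  by_cases hv : v ∈ shiftUnion C i <;>
    rcases zmod_two_eq_zero_or_eq_one (iParity i v) with h | h
  exacts [⟨0, hv, h⟩, ⟨3, hv, h⟩, ⟨2, hv, h.trans (by decide)⟩, ⟨1, hv, h⟩]

end PerfectCode

namespace IsPerfectCode

open PerfectCode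

variable {n : ℕ} {C : Set (Fin n → ZMod 2)} {i : Fin n} {v : Fin n → ZMod 2}

lemma neighborDirs_eq_empty (hC : IsPerfectCode n C) (hv : v ∈ C) :
    neighborDirs C v = ∅ := by
  refine Set.eq_empty_of_forall_notMem fun m hm => ?_
  have h := (hC v).unique ⟨hv, by simp⟩ ⟨hm, (hammingDist_add_unitVec v m).le⟩
  simpa [unitVec] using congrFun h m

lemma exists_neighborDirs_eq_singleton (hC : IsPerfectCode n C) (hv : v ∉ C) :
    ∃ k, neighborDirs C v = {k} := by
  obtain ⟨c, ⟨hc, hdist⟩, hunique⟩ := hC v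
  have hdist_one : hammingDist v c = 1 :=
    le_antisymm hdist (hammingDist_pos.mpr fun h => hv (h ▸ hc))
  obtain ⟨k, rfl⟩ := hammingDist_eq_one_iff.mp hdist_one
  refine ⟨k, Set.eq_singleton_iff_unique_mem.mpr ⟨hc, fun m hm => ?_⟩⟩
  exact unitVec_injective (add_left_cancel
    (hunique _ ⟨hm, (hammingDist_add_unitVec v m).le⟩))

lemma neighborDirs_shiftUnion_of_mem_code (hC : IsPerfectCode n C) (hv : v ∈ C) :
    neighborDirs (shiftUnion C i) v = {i} := by
  have hvi : v + unitVec n i ∉ C := fun h =>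
    (hC.neighborDirs_eq_empty hv).subset (show i ∈ neighborDirs C v from h)
  obtain ⟨k, hk⟩ := hC.exists_neighborDirs_eq_singleton hvi
  have hik : i ∈ neighborDirs C (v + unitVec n i) := by
    simpa only [neighborDirs, Set.mem_ofPred_eq, add_add_self] using hv
  rw [hk, Set.mem_singleton_iff] at hik
  rw [neighborDirs_shiftUnion, hC.neighborDirs_eq_empty hv, hk, hik, Set.empty_union]

lemma neighborDirs_shiftUnion_of_mem (hC : IsPerfectCode n C) (hv : v ∈ shiftUnion C i) :
    neighborDirs (shiftUnion C i) v = {i} := by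
  rcases hv with hv | hv
  · exact hC.neighborDirs_shiftUnion_of_mem_code hv
  · rw [← neighborDirs_shiftUnion_add_unitVec]
    exact hC.neighborDirs_shiftUnion_of_mem_code hv

lemma exists_neighborDirs_shiftUnion_of_notMem (hC : IsPerfectCode n C)
    (hv : v ∉ shiftUnion C i) :
    ∃ j p, j ≠ i ∧ p ≠ i ∧ j ≠ p ∧ neighborDirs (shiftUnion C i) v = {j, p} := by
  obtain ⟨hvC, hviC⟩ := not_or.mp hv
  obtain ⟨j, hj⟩ := hC.exists_neighborDirs_eq_singleton hvC
  obtain ⟨p, hp⟩ := hC.exists_neighborDirs_eq_singleton hviC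
  have hjC : v + unitVec n j ∈ C := (hj ▸ rfl : j ∈ neighborDirs C v)
  have hpC : v + unitVec n i + unitVec n p ∈ C := (hp ▸ rfl : p ∈ neighborDirs C _)
  refine ⟨j, p, ?_, ?_, ?_, by rw [neighborDirs_shiftUnion, hj, hp, Set.singleton_union]⟩
  · rintro rfl
    exact hviC hjC
  · rintro rfl
    exact hvC (by rwa [add_add_self] at hpC)
  · rintro rfl
    refine (hC.neighborDirs_eq_empty hjC).subset (show i ∈ neighborDirs C _ from ?_)
    rwa [neighborDirs, Set.mem_ofPred_eq, add_right_comm]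

lemma distOne_innerClass (hC : IsPerfectCode n C) (ε : ZMod 2) :
    DistOne n (innerClass C i ε) = outerClass C i ε := by
  ext v
  rw [mem_distOne_iff, neighborDirs_innerClass]
  by_cases hv : v ∈ shiftUnion C i
  · rw [hC.neighborDirs_shiftUnion_of_mem hv]
    simp [innerClass, outerClass, hv, Set.Nonempty]
  · obtain ⟨j, p, hji, hpi, -, hdirs⟩ := hC.exists_neighborDirs_shiftUnion_of_notMem hv
    rw [hdirs]
    simp [innerClass, outerClass, hv, Set.Nonempty, hji, hpi, zmod_two_add_one_eq_iff]

variable {ε : ZMod 2}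

lemma neighborCount_innerClass_of_mem_innerClass (hC : IsPerfectCode n C)
    (hv : v ∈ innerClass C i ε) (ε' : ZMod 2) :
    neighborCount (innerClass C i ε') v = if ε' = ε then 1 else 0 := by
  rw [neighborCount_eq_ncard_neighborDirs, neighborDirs_innerClass,
    hC.neighborDirs_shiftUnion_of_mem hv.1, hv.2]
  split_ifs with h
  · subst h
    convert Set.ncard_singleton i
    ext m
    by_cases hm : m = i <;> simp [hm]
  · obtain rfl := zmod_two_eq_add_one_of_ne h
    convert Set.ncard_empty (Fin n)
    ext m
    by_cases hm : m = i <;> simp [hm]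

lemma neighborCount_outerClass_of_mem_innerClass (hC : IsPerfectCode n C)
    (hv : v ∈ innerClass C i ε) (ε' : ZMod 2) :
    neighborCount (outerClass C i ε') v = if ε' = ε then n - 1 else 0 := by
  rw [neighborCount_eq_ncard_neighborDirs, neighborDirs_outerClass,
    hC.neighborDirs_shiftUnion_of_mem hv.1, hv.2]
  split_ifs with h
  · subst h
    convert ncard_compl_singleton i
    ext m
    by_cases hm : m = i <;> simp [hm]
  · obtain rfl := zmod_two_eq_add_one_of_ne h
    convert Set.ncard_empty (Fin n)
    ext m
    by_cases hm : m = i <;> simp [hm]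

lemma neighborCount_innerClass_of_mem_outerClass (hC : IsPerfectCode n C)
    (hv : v ∈ outerClass C i ε) (ε' : ZMod 2) :
    neighborCount (innerClass C i ε') v = if ε' = ε then 2 else 0 := by
  obtain ⟨j, p, hji, hpi, hjp, hdirs⟩ := hC.exists_neighborDirs_shiftUnion_of_notMem hv.1
  rw [neighborCount_eq_ncard_neighborDirs, neighborDirs_innerClass, hdirs, hv.2]
  split_ifs with h
  · subst h
    convert Set.ncard_pair hjp
    ext m
    by_cases hm : m = i <;> simp [hm, CharTwo.add_cancel_right, hji.symm, hpi.symm]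
  · obtain rfl := zmod_two_eq_add_one_of_ne h
    convert Set.ncard_empty (Fin n)
    ext m
    by_cases hm : m = i <;> simp [hm, hji.symm, hpi.symm]

lemma neighborCount_outerClass_of_mem_outerClass (hC : IsPerfectCode n C)
    (hv : v ∈ outerClass C i ε) (ε' : ZMod 2) :
    neighborCount (outerClass C i ε') v = if ε' = ε then 1 else n - 3 := by
  obtain ⟨j, p, hji, hpi, hjp, hdirs⟩ := hC.exists_neighborDirs_shiftUnion_of_notMem hv.1
  rw [neighborCount_eq_ncard_neighborDirs, neighborDirs_outerClass, hdirs, hv.2]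
  split_ifs with h
  · subst h
    convert Set.ncard_singleton i
    ext m
    by_cases hm : m = i <;> simp [hm, hji.symm, hpi.symm]
  · obtain rfl := zmod_two_eq_add_one_of_ne h
    convert ncard_compl_triple hji hpi hjp
    ext m
    by_cases hm : m = i <;> simp [hm, hji.symm, hpi.symm]

lemma neighborCount_colorClass (hC : IsPerfectCode n C) {j : Fin 4}
    (hv : v ∈ colorClass C i j) (k : Fin 4) :
    neighborCount (colorClass C i k) v =
      ![![1, n - 1, 0, 0], ![2, 1, n - 3, 0], ![0, n - 3, 1, 2], ![0, 0, n - 1, 1]] j k := by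
  fin_cases j <;> simp only [colorClass] at hv
  · fin_cases k <;> simp [colorClass, hC.neighborCount_innerClass_of_mem_innerClass hv,
      hC.neighborCount_outerClass_of_mem_innerClass hv]
  · fin_cases k <;> simp [colorClass, hC.neighborCount_innerClass_of_mem_outerClass hv,
      hC.neighborCount_outerClass_of_mem_outerClass hv]
  · fin_cases k <;> simp [colorClass, hC.neighborCount_innerClass_of_mem_outerClass hv,
      hC.neighborCount_outerClass_of_mem_outerClass hv]
  · fin_cases k <;> simp [colorClass, hC.neighborCount_innerClass_of_mem_innerClass hv,
      hC.neighborCount_outerClass_of_mem_innerClass hv]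

end IsPerfectCode

open PerfectCode

theorem stmt_15_general (n : ℕ)
    (C : Set (Fin n → ZMod 2)) (hC : IsPerfectCode n C) (i : Fin n)
    (I I' I1 I1' : Set (Fin n → ZMod 2))
    (hI : I = {x ∈ C | IEven n i x}) (hI' : I' = {x ∈ C | ¬ IEven n i x})
    (hI1 : I1 = DistOne n (I ∪ (fun x => x + unitVec n i) '' I))
    (hI1' : I1' = DistOne n (I' ∪ (fun x => x + unitVec n i) '' I')) :
    (∀ j k : Fin 4, j ≠ k →
      Disjoint (![I ∪ (fun x => x + unitVec n i) '' I, I1, I1',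
          I' ∪ (fun x => x + unitVec n i) '' I'] j)
        (![I ∪ (fun x => x + unitVec n i) '' I, I1, I1',
          I' ∪ (fun x => x + unitVec n i) '' I'] k)) ∧
    (⋃ j : Fin 4, ![I ∪ (fun x => x + unitVec n i) '' I, I1, I1',
        I' ∪ (fun x => x + unitVec n i) '' I'] j) = Set.univ ∧
    (∀ j : Fin 4, ∀ v ∈ ![I ∪ (fun x => x + unitVec n i) '' I, I1, I1',
        I' ∪ (fun x => x + unitVec n i) '' I'] j, ∀ k : Fin 4,
      {w | hammingDist v w = 1 ∧
          w ∈ ![I ∪ (fun x => x + unitVec n i) '' I, I1, I1',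
            I' ∪ (fun x => x + unitVec n i) '' I'] k}.ncard =
        ![![1, n - 1, 0, 0],
          ![2, 1, n - 3, 0],
          ![0, n - 3, 1, 2],
          ![0, 0, n - 1, 1]] j k) := by
  subst hI hI' hI1 hI1'
  simp only [not_iEven_iff]
  simp only [iEven_iff, union_image_add_unitVec_eq_innerClass, hC.distOne_innerClass]
  exact ⟨pairwise_disjoint_colorClass, iUnion_colorClass,
    fun j v hv k => hC.neighborCount_colorClass hv k⟩

theorem stmt_15 (r n : ℕ) (hr : 3 ≤ r) (hn : n = 2 ^ r - 1)
    (C : Set (Fin n → ZMod 2)) (hC : IsPerfectCode n C) (i : Fin n)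
    (I I' I1 I1' : Set (Fin n → ZMod 2))
    (hI : I = {x ∈ C | IEven n i x}) (hI' : I' = {x ∈ C | ¬ IEven n i x})
    (hI1 : I1 = DistOne n (I ∪ (fun x => x + unitVec n i) '' I))
    (hI1' : I1' = DistOne n (I' ∪ (fun x => x + unitVec n i) '' I')) :
    (∀ j k : Fin 4, j ≠ k →
      Disjoint (![I ∪ (fun x => x + unitVec n i) '' I, I1, I1',
          I' ∪ (fun x => x + unitVec n i) '' I'] j)
        (![I ∪ (fun x => x + unitVec n i) '' I, I1, I1',
          I' ∪ (fun x => x + unitVec n i) '' I'] k)) ∧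
    (⋃ j : Fin 4, ![I ∪ (fun x => x + unitVec n i) '' I, I1, I1',
        I' ∪ (fun x => x + unitVec n i) '' I'] j) = Set.univ ∧
    (∀ j : Fin 4, ∀ v ∈ ![I ∪ (fun x => x + unitVec n i) '' I, I1, I1',
        I' ∪ (fun x => x + unitVec n i) '' I'] j, ∀ k : Fin 4,
      {w | hammingDist v w = 1 ∧
          w ∈ ![I ∪ (fun x => x + unitVec n i) '' I, I1, I1',
            I' ∪ (fun x => x + unitVec n i) '' I'] k}.ncard =
        ![![1, n - 1, 0, 0],
          ![2, 1, n - 3, 0],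
          ![0, n - 3, 1, 2],
          ![0, 0, n - 1, 1]] j k) :=
  stmt_15_general n C hC i I I' I1 I1' hI hI' hI1 hI1'
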